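/- Let u = m·q for positive integers m and q, let x_1, …, x_s be distinct elements of Fin u with s ≤ n, set B = n/m, and let 0 < δ ≤ 1. Let π be a permutation of Fin u drawn uniformly at random, assigning element x_i to bin ⌊π(x_i)/q⌋ ∈ Fin m. Then for every fixed bin β ∈ Fin m, the probability that at least (1+δ)B of the elements x_1, …, x_s are assigned to bin β is at most exp(−δ²B/3). -/

import Mathlib

/-!
Apply Markov's inequality to `(1 + δ) ^ N`, where `N` counts the elements landing in bin `β`.
Expanding `(1 + δ) ^ N = ∑_T δ ^ |T| [T lands in β]`, it suffices that a fixed set `T` of `t`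
elements lands in `β` with probability at most `m ^ (-t)`. Since `π` restricted to `T` is a
uniformly random embedding, this probability is `q.descFactorial t / u.descFactorial t`, and
`m * (q - k) ≤ m * q - k` bounds it by `m ^ (-t)`. Hence `𝔼 (1 + δ) ^ N ≤ (1 + δ / m) ^ s ≤
exp (δ B)`, and `δ + δ² / 3 ≤ (1 + δ) log (1 + δ)` on `[0, 1]` turns this into `exp (-δ² B / 3)`.
-/

open Finset

namespace MulAction

variable {G X : Type*} [Group G] [Fintype G] [MulAction G X] [IsPretransitive G X] [DecidableEq X]

theorem card_filter_smul_eq_eq_card_filter_smul_eq (a b c : X) :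
    #{g : G | g • a = b} = #{g : G | g • a = c} := by
  obtain ⟨h, rfl⟩ := exists_smul_eq G b c
  refine card_nbij' (h * ·) (h⁻¹ * ·) ?_ ?_ ?_ ?_ <;> intro g <;>
    simp [mul_smul, smul_eq_iff_eq_inv_smul]

theorem card_filter_smul_mem_eq_mul (a b : X) (E : Finset X) :
    #{g : G | g • a ∈ E} = #E * #{g : G | g • a = b} := by
  rw [card_eq_sum_card_fiberwise (s := {g : G | g • a ∈ E}) (f := fun g : G => g • a) (t := E)
    (fun g hg => (mem_filter.1 hg).2), ← smul_eq_mul, ← sum_const]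
  refine sum_congr rfl fun c hc => ?_
  rw [← card_filter_smul_eq_eq_card_filter_smul_eq a c b, filter_filter]
  congr 1
  ext g
  simp only [mem_filter, mem_univ, true_and, and_iff_right_iff_imp]
  exact fun h => h ▸ hc

theorem card_filter_smul_mem_mul_card [Fintype X] (a : X) (E : Finset X) :
    #{g : G | g • a ∈ E} * Fintype.card X = #E * Fintype.card G := by
  have hG : Fintype.card G = Fintype.card X * #{g : G | g • a = a} := by
    simpa using card_filter_smul_mem_eq_mul (G := G) a a univ
  rw [card_filter_smul_mem_eq_mul a a E, hG]
  ring

end MulAction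

instance Equiv.Perm.isPretransitive_embedding {ι α : Type*} [Finite ι] :
    MulAction.IsPretransitive (Equiv.Perm α) (ι ↪ α) :=
  ⟨Equiv.Perm.exists_smul_eq_embedding⟩

theorem Equiv.Perm.card_filter_forall_apply_mem_mul_descFactorial {ι α : Type*} [Fintype ι]
    [Fintype α] [DecidableEq α] (e : ι ↪ α) (S : Finset α) :
    #{σ : Equiv.Perm α | ∀ i, σ (e i) ∈ S} * (Fintype.card α).descFactorial (Fintype.card ι) =
      (#S).descFactorial (Fintype.card ι) * (Fintype.card α).factorial := by
  classical
  have hE : #{f : ι ↪ α | ∀ i, f i ∈ S} = (#S).descFactorial (Fintype.card ι) := calc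
    _ = Fintype.card {f : ι ↪ α // ∀ i, f i ∈ (S : Set α)} := (Fintype.card_subtype _).symm
    _ = Fintype.card (ι ↪ (S : Set α)) := Fintype.card_congr (Equiv.codRestrict ι _)
    _ = _ := by rw [Fintype.card_embedding_eq]; simp
  have := MulAction.card_filter_smul_mem_mul_card (G := Equiv.Perm α) e {f | ∀ i, f i ∈ S}
  simp only [mem_filter, mem_univ, true_and, Function.Embedding.smul_apply,
    Equiv.Perm.smul_def] at this
  rwa [Fintype.card_embedding_eq, hE, Fintype.card_perm] at this

theorem Fin.card_filter_div_eq (m q : ℕ) (β : Fin m) :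
    #{v : Fin (m * q) | v.val / q = β.val} = q := by
  have : ({v : Fin (m * q) | v.val / q = β.val} : Finset _) =
      (({β} : Finset (Fin m)) ×ˢ univ).map finProdFinEquiv.toEmbedding := by
    ext v
    obtain ⟨⟨a, b⟩, rfl⟩ := finProdFinEquiv.surjective v
    have hq : 0 < q := b.pos
    simp [finProdFinEquiv, Nat.add_mul_div_left _ _ hq, Nat.div_eq_of_lt b.2,
      Nat.mod_eq_of_lt b.2, Fin.ext_iff, eq_comm]
  simp [this]

theorem Nat.descFactorial_mul_pow_le (q m t : ℕ) :
    q.descFactorial t * m ^ t ≤ (m * q).descFactorial t := by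
  induction t with
  | zero => simp
  | succ t ih =>
    rw [Nat.descFactorial_succ, Nat.descFactorial_succ, pow_succ]
    calc (q - t) * q.descFactorial t * (m ^ t * m)
        = ((q - t) * m) * (q.descFactorial t * m ^ t) := by ring
      _ ≤ (m * q - t) * (m * q).descFactorial t := by
        gcongr
        rcases Nat.eq_zero_or_pos m with rfl | hm
        · simp
        · rw [Nat.sub_mul, mul_comm q]
          exact Nat.sub_le_sub_left (Nat.le_mul_of_pos_right t hm) _

theorem Equiv.Perm.card_filter_forall_div_eq_mul_pow_le {κ : Type*} {m q : ℕ}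
    (x : κ → Fin (m * q)) (hx : Function.Injective x) (β : Fin m) (T : Finset κ) :
    #{σ : Equiv.Perm (Fin (m * q)) | ∀ i ∈ T, (σ (x i)).val / q = β.val} * m ^ #T ≤
      (m * q).factorial := by
  let e : T ↪ Fin (m * q) := (Function.Embedding.subtype _).trans ⟨x, hx⟩
  have hcount := card_filter_forall_apply_mem_mul_descFactorial e {v | v.val / q = β.val}
  simp only [Fintype.card_coe, Fintype.card_fin, Fin.card_filter_div_eq, mem_filter, mem_univ,
    true_and, Subtype.forall, e, Function.Embedding.trans_apply, Function.Embedding.coe_subtype,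
    Function.Embedding.coeFn_mk] at hcount
  have hpos : 0 < (m * q).descFactorial #T := by
    simpa [Nat.descFactorial_pos] using Fintype.card_le_of_embedding e
  refine Nat.le_of_mul_le_mul_right ?_ hpos
  calc _ = q.descFactorial #T * m ^ #T * (m * q).factorial := by
        rw [mul_right_comm, hcount, mul_right_comm]
    _ ≤ (m * q).descFactorial #T * (m * q).factorial := by
        gcongr
        exact Nat.descFactorial_mul_pow_le q m _
    _ = _ := mul_comm _ _

theorem Finset.add_one_pow_card {ι R : Type*} [CommSemiring R] (s : Finset ι) (a : R) :
    (a + 1) ^ #s = ∑ T ∈ s.powerset, a ^ #T := by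
  simpa using (sum_pow_mul_eq_add_pow a 1 s).symm

namespace Real

theorem add_sq_div_three_le_one_add_mul_log {δ : ℝ} (hδ0 : 0 ≤ δ) (hδ1 : δ ≤ 1) :
    δ + δ ^ 2 / 3 ≤ (1 + δ) * log (1 + δ) := calc
  δ + δ ^ 2 / 3 ≤ (1 + δ) * (2 * δ / (δ + 2)) := by
    rw [mul_div_assoc', le_div_iff₀ (by positivity)]
    nlinarith [mul_nonneg (sq_nonneg δ) (sub_nonneg.2 hδ1)]
  _ ≤ (1 + δ) * log (1 + δ) := by gcongr; exact le_log_one_add_of_nonneg hδ0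

end Real

section Chernoff

open Real

variable {Ω ι : Type*} [Fintype Ω] [Fintype ι] (A : ι → Ω → Prop) [∀ i ω, Decidable (A i ω)]

theorem sum_one_add_pow_card_filter_le {p δ : ℝ} (hδ : 0 ≤ δ)
    (hA : ∀ T : Finset ι, (#{ω | ∀ i ∈ T, A i ω} : ℝ) ≤ p ^ #T * Fintype.card Ω) :
    ∑ ω, (1 + δ) ^ #{i | A i ω} ≤ (1 + δ * p) ^ Fintype.card ι * Fintype.card Ω := calc
  ∑ ω, (1 + δ) ^ #{i | A i ω}
      = ∑ T : Finset ι, ∑ _ω ∈ {ω | ∀ i ∈ T, A i ω}, δ ^ #T := by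
        simp_rw [add_comm (1 : ℝ), add_one_pow_card]
        exact sum_comm' fun ω T => by simp [subset_iff]
  _ ≤ ∑ T : Finset ι, δ ^ #T * (p ^ #T * Fintype.card Ω) := by
        gcongr with T
        rw [sum_const, nsmul_eq_mul, mul_comm]
        gcongr
        exact hA T
  _ = (1 + δ * p) ^ Fintype.card ι * Fintype.card Ω := by
        rw [← card_univ (α := ι), add_comm (1 : ℝ), add_one_pow_card, sum_mul, powerset_univ]
        simp [mul_pow, mul_assoc]

/-- The hypothesis `hA` replaces independence: every intersection of the events `A i` is at
most as likely as for independent events of probability `p`. -/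
theorem chernoff_card_filter_le {p μ δ : ℝ} (hp : 0 ≤ p)
    (hμ : Fintype.card ι * p ≤ μ) (hδ0 : 0 ≤ δ) (hδ1 : δ ≤ 1)
    (hA : ∀ T : Finset ι, (#{ω | ∀ i ∈ T, A i ω} : ℝ) ≤ p ^ #T * Fintype.card Ω) :
    (#{ω | (1 + δ) * μ ≤ #{i | A i ω}} : ℝ) ≤ exp (-(δ ^ 2 * μ / 3)) * Fintype.card Ω := by
  have hμ0 : 0 ≤ μ := le_trans (by positivity) hμ
  set E := exp ((1 + δ) * μ * log (1 + δ))
  have markov : #{ω | (1 + δ) * μ ≤ #{i | A i ω}} * E ≤ ∑ ω, (1 + δ) ^ #{i | A i ω} := by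
    rw [← nsmul_eq_mul]
    refine (card_nsmul_le_sum _ _ _ fun ω hω => ?_).trans
      (sum_le_sum_of_subset_of_nonneg (subset_univ _) fun _ _ _ => by positivity)
    rw [← rpow_natCast, rpow_def_of_pos (by linarith), mul_comm (log _)]
    exact exp_le_exp.2 (mul_le_mul_of_nonneg_right (mem_filter.1 hω).2 (log_nonneg (by linarith)))
  have moment : (1 + δ * p) ^ Fintype.card ι ≤ exp (δ * μ) := calc
    (1 + δ * p) ^ Fintype.card ι ≤ exp (δ * p) ^ Fintype.card ι := by
      rw [add_comm]
      exact pow_le_pow_left₀ (by positivity) (add_one_le_exp _) _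
    _ ≤ exp (δ * μ) := by
      rw [← exp_nat_mul, exp_le_exp]
      nlinarith [mul_le_mul_of_nonneg_left hμ hδ0]
  have tail : exp (δ * μ) ≤ exp (-(δ ^ 2 * μ / 3)) * E := by
    rw [← exp_add]
    gcongr
    nlinarith [mul_le_mul_of_nonneg_left (add_sq_div_three_le_one_add_mul_log hδ0 hδ1) hμ0]
  refine le_of_mul_le_mul_right ?_ (exp_pos ((1 + δ) * μ * log (1 + δ)))
  calc _ ≤ _ := markov
    _ ≤ (1 + δ * p) ^ Fintype.card ι * Fintype.card Ω := sum_one_add_pow_card_filter_le A hδ0 hA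
    _ ≤ exp (δ * μ) * Fintype.card Ω := by gcongr
    _ ≤ exp (-(δ ^ 2 * μ / 3)) * E * Fintype.card Ω := by gcongr
    _ = _ := by ring

end Chernoff

theorem full_bin_dictionary_prob_general
    (u m q s n : ℕ) (hu : u = m * q) (hs : s ≤ n)
    (x : Fin s → Fin u) (hx : Function.Injective x)
    (B : ℝ) (hB : B = (n : ℝ) / m)
    (δ : ℝ) (hδ0 : 0 < δ) (hδ1 : δ ≤ 1)
    (β : Fin m) :
    ((Finset.univ.filter (fun π : Equiv.Perm (Fin u) =>
        (1 + δ) * B ≤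
          ((Finset.univ.filter
              (fun i : Fin s => (π (x i)).val / q = β.val)).card : ℝ))).card : ℝ)
      / (Fintype.card (Equiv.Perm (Fin u)) : ℝ)
      ≤ Real.exp (-(δ ^ 2 * B / 3)) := by
  subst hu hB
  have hm : (0 : ℝ) < m := by exact_mod_cast β.pos
  have hmean : (Fintype.card (Fin s) : ℝ) * (1 / m) ≤ n / m := by
    rw [Fintype.card_fin, mul_one_div]
    gcongr
  rw [div_le_iff₀ (by positivity)]
  refine chernoff_card_filter_le (p := 1 / m) (μ := n / m)
    (fun (i : Fin s) (π : Equiv.Perm (Fin (m * q))) => (π (x i)).val / q = β.val)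
    (by positivity) hmean hδ0.le hδ1 fun T => ?_
  rw [Fintype.card_perm, Fintype.card_fin, one_div_pow, one_div_mul_eq_div,
    le_div_iff₀ (by positivity), ← Nat.cast_pow, ← Nat.cast_mul, Nat.cast_le]
  exact Equiv.Perm.card_filter_forall_div_eq_mul_pow_le x hx β T

/-- Let `u = m * q`, let `x₁, …, x_s` be distinct elements of `Fin u` with `s ≤ n`,
set `B = n/m`, and let `0 < δ ≤ 1`.  For a uniformly random permutation `π` of
`Fin u` assigning `xᵢ` to bin `⌊π xᵢ / q⌋ ∈ Fin m`, the probability that at least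
`(1+δ)B` of the elements `x₁, …, x_s` are assigned to a fixed bin `β ∈ Fin m` is
at most `exp(−δ²B/3)`. -/
theorem full_bin_dictionary_prob
    (u m q s n : ℕ) (hm : 0 < m) (hq : 0 < q) (hu : u = m * q) (hs : s ≤ n)
    (x : Fin s → Fin u) (hx : Function.Injective x)
    (B : ℝ) (hB : B = (n : ℝ) / m)
    (δ : ℝ) (hδ0 : 0 < δ) (hδ1 : δ ≤ 1)
    (β : Fin m) :
    ((Finset.univ.filter (fun π : Equiv.Perm (Fin u) =>
        (1 + δ) * B ≤
          ((Finset.univ.filter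
              (fun i : Fin s => (π (x i)).val / q = β.val)).card : ℝ))).card : ℝ)
      / (Fintype.card (Equiv.Perm (Fin u)) : ℝ)
      ≤ Real.exp (-(δ ^ 2 * B / 3)) :=
  full_bin_dictionary_prob_general u m q s n hu hs x hx B hB δ hδ0 hδ1 β
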